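/- Let B be a uniformly random sequence in {+1, −1}^w and for k > 0 let E^L_k be the event that some prefix sum of B is at most −k. Then for every integer b such that Pr(χ(B) ≥ b) > 0, one has Pr(E^L_k | χ(B) ≥ b) ≤ w/k². -/

import Mathlib

open MeasureTheory ProbabilityTheory
open scoped ENNReal NNReal

namespace Schelling

/-- Labels: `true` = type `x`, `false` = type `o`.
A configuration on the ring of `n` nodes assigns a label to each node. -/
abbrev Config (n : ℕ) := ZMod n → Bool

/-- The ±1 value of a label: `x ↦ +1`, `o ↦ -1`. -/
def xval (b : Bool) : ℤ := if b then 1 else -1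

/-- A node `i` is happy (tolerance τ = 1/2) if at least `w` of its `2w` nearest
neighbours `i ± 1, …, i ± w` carry the same label as `i`. -/
def happy (w : ℕ) {n : ℕ} (c : Config n) (i : ZMod n) : Prop :=
  w ≤ ∑ k ∈ Finset.Icc 1 w,
      ((if c (i + (k : ZMod n)) = c i then 1 else 0) +
       (if c (i - (k : ZMod n)) = c i then 1 else 0))

instance (w : ℕ) {n : ℕ} (c : Config n) (i : ZMod n) : Decidable (happy w c i) :=
  Nat.decLe _ _

/-- The result of exchanging the labels of nodes `i` and `j`. -/
def doSwap {n : ℕ} (c : Config n) (i j : ZMod n) : Config n :=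
  Function.update (Function.update c i (c j)) j (c i)

/-- One step of the dynamics: the proposed pair `p` swaps labels iff both nodes are
unhappy and carry opposite labels. -/
def swapStep (w : ℕ) {n : ℕ} (c : Config n) (p : ZMod n × ZMod n) : Config n :=
  if ¬ happy w c p.1 ∧ ¬ happy w c p.2 ∧ c p.1 ≠ c p.2 then doSwap c p.1 p.2 else c

/-- The trajectory of the segregation process started from `c0`, where `pr t` is the
pair of nodes proposed for a swap at time `t`. -/
def traj (w : ℕ) {n : ℕ} (c0 : Config n) (pr : ℕ → ZMod n × ZMod n) : ℕ → Config n
  | 0 => c0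
  | t + 1 => swapStep w (traj w c0 pr t) (pr t)

/-- A configuration is frozen if it contains no pair of unhappy, oppositely labeled
nodes, so that no further swaps are possible. -/
def Frozen (w : ℕ) {n : ℕ} (c : Config n) : Prop :=
  ∀ i j : ZMod n, ¬(¬ happy w c i ∧ ¬ happy w c j ∧ c i ≠ c j)

/-- `c'` is obtained from `c` by one legal swap: two distinct unhappy, oppositely
labeled nodes exchange labels. -/
def LegalSwap (w : ℕ) {n : ℕ} (c c' : Config n) : Prop :=
  ∃ i j : ZMod n, i ≠ j ∧ ¬ happy w c i ∧ ¬ happy w c j ∧ c i ≠ c j ∧ c' = doSwap c i j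

/-- The block of `len` consecutive nodes starting at `s` is monochromatic. -/
def MonochromaticBlock {n : ℕ} (c : Config n) (s : ZMod n) (len : ℕ) : Prop :=
  ∀ k < len, c (s + (k : ZMod n)) = c s

/-- A firewall is a monochromatic block of at least `w + 1` consecutive nodes. -/
def HasFirewall (w : ℕ) {n : ℕ} (c : Config n) : Prop :=
  ∃ (s : ZMod n) (len : ℕ), w + 1 ≤ len ∧ MonochromaticBlock c s len

/-- Node `i` belongs to some firewall of `c`. -/
def InFirewall (w : ℕ) {n : ℕ} (c : Config n) (i : ZMod n) : Prop :=
  ∃ (s : ZMod n) (len : ℕ), w + 1 ≤ len ∧ MonochromaticBlock c s len ∧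
    ∃ k < len, i = s + (k : ZMod n)

instance (n : ℕ) : MeasurableSpace (ZMod n) := ⊤

/-- The uniform probability measure on a finite set `s`. -/
noncomputable def uniformOn {α : Type*} [MeasurableSpace α] (s : Finset α) : Measure α :=
  (s.card : ℝ≥0∞)⁻¹ • ∑ a ∈ s, Measure.dirac a

/-- Unordered proposals are modeled as ordered pairs of distinct nodes. -/
def distinctPairs (n : ℕ) [NeZero n] : Finset (ZMod n × ZMod n) :=
  Finset.univ.filter fun p => p.1 ≠ p.2

/-- The uniform distribution of the initial configuration. -/
noncomputable def configMeasure (n : ℕ) [NeZero n] : Measure (Config n) :=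
  uniformOn (Finset.univ : Finset (Config n))

/-- The uniform distribution of a proposed pair. -/
noncomputable def pairMeasure (n : ℕ) [NeZero n] : Measure (ZMod n × ZMod n) :=
  uniformOn (distinctPairs n)

/-- `(init, prop)` is a realization of the segregation process randomness: for every
finite horizon `T`, the initial configuration together with the first `T` proposals is
distributed as (uniform configuration) × (i.i.d. uniform distinct pairs). -/
def IsSchellingProcess (n : ℕ) [NeZero n] {Ω : Type*} [MeasurableSpace Ω]
    (μ : Measure Ω) (init : Ω → Config n) (prop : ℕ → Ω → ZMod n × ZMod n) : Prop :=
  ∀ T : ℕ, Measure.map (fun ω => (init ω, fun t : Fin T => prop t ω)) μ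
      = (configMeasure n).prod (Measure.pi fun _ : Fin T => pairMeasure n)

/-- The x-bias of node `i`: the sum of the ±1 values over the window `i - w, …, i + w`. -/
def bias (w : ℕ) {n : ℕ} (c : Config n) (i : ZMod n) : ℤ :=
  xval (c i) + ∑ k ∈ Finset.Icc 1 w,
    (xval (c (i + (k : ZMod n))) + xval (c (i - (k : ZMod n))))

/-- An x-firewall incubator: a block `F` of `len` consecutive nodes starting at `s`,
made of a left defender (first `w+1` nodes), an internal block, and a right defender
(last `w+1` nodes), such that every node of `F` has x-bias `> √w`, the minimum bias on
the left defender is attained at its left endpoint, and the minimum bias on the right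
defender is attained at its right endpoint. -/
def IsIncubator (w : ℕ) {n : ℕ} (c : Config n) (s : ZMod n) (len : ℕ) : Prop :=
  2 * (w + 1) ≤ len ∧
  (∀ k < len, Real.sqrt w < ((bias w c (s + (k : ZMod n)) : ℤ) : ℝ)) ∧
  (∀ k < w + 1, bias w c s ≤ bias w c (s + (k : ZMod n))) ∧
  (∀ k < w + 1,
    bias w c (s + ((len - 1 : ℕ) : ZMod n)) ≤ bias w c (s + ((len - 1 - k : ℕ) : ZMod n)))

/-- The sum of the first `j` entries of a ±1 sequence. -/
def chiPrefix {m : ℕ} (B : Fin m → Bool) (j : ℕ) : ℤ :=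
  ∑ i : Fin m, if (i : ℕ) < j then xval (B i) else 0

/-- The total sum of a ±1 sequence. -/
def chi {m : ℕ} (B : Fin m → Bool) : ℤ := ∑ i : Fin m, xval (B i)

/-- The sum of the last `j` entries of a ±1 sequence. -/
def chiSuffix {m : ℕ} (B : Fin m → Bool) (j : ℕ) : ℤ :=
  ∑ i : Fin m, if m - j ≤ (i : ℕ) then xval (B i) else 0

/-- A sequence `B ∈ {±1}^w` is x-promoting if `χ(B) ≥ 5√w` and for all `1 ≤ j ≤ w`,
`χ_j(B) > -2√w` and `χ_{-j}(B) > -2√w`. -/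
def XPromoting (w : ℕ) (B : Fin w → Bool) : Prop :=
  5 * Real.sqrt w ≤ ((chi B : ℤ) : ℝ) ∧
  ∀ j : ℕ, 1 ≤ j → j ≤ w →
    (-2) * Real.sqrt w < ((chiPrefix B j : ℤ) : ℝ) ∧
    (-2) * Real.sqrt w < ((chiSuffix B j : ℤ) : ℝ)

/-- The concatenation of the three length-`w` sequences `B, B', B''`, as a function on
positions `0, …, 3w - 1`. -/
def concat3 (w : ℕ) (B B' B'' : Fin w → Bool) (i : ℕ) : Bool :=
  if h : i < w then B ⟨i, h⟩
  else if h' : i < 2 * w then B' ⟨i - w, by omega⟩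
  else if h'' : i < 3 * w then B'' ⟨i - 2 * w, by omega⟩
  else false

/-- The sign sequences of length `a + b` containing exactly `a` entries `+1`
(i.e. `true`) and `b` entries `-1` (i.e. `false`). -/
def ballotSeqs (a b : ℕ) : Finset (Fin (a + b) → Bool) :=
  Finset.univ.filter fun f => (Finset.univ.filter fun i => f i = true).card = a

/-- Node `i` is, at time `t`, selected to participate in a proposed swap together with
an unhappy, oppositely labeled node. -/
def selectedWith (w : ℕ) {n : ℕ} (c0 : Config n) (pr : ℕ → ZMod n × ZMod n)
    (i : ZMod n) (t : ℕ) : Prop :=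
  ((pr t).1 = i ∧ ¬ happy w (traj w c0 pr t) (pr t).2 ∧
      traj w c0 pr t (pr t).2 ≠ traj w c0 pr t i) ∨
  ((pr t).2 = i ∧ ¬ happy w (traj w c0 pr t) (pr t).1 ∧
      traj w c0 pr t (pr t).1 ≠ traj w c0 pr t i)

/-- The satisfaction time of node `i`: the first time at which `i` is selected in a
proposed swap together with an unhappy, oppositely labeled node (`∞` if never). -/
noncomputable def satTime (w : ℕ) {n : ℕ} (c0 : Config n) (pr : ℕ → ZMod n × ZMod n)
    (i : ZMod n) : ℕ∞ :=
  sInf {t : ℕ∞ | ∃ t' : ℕ, t = (t' : ℕ∞) ∧ selectedWith w c0 pr i t'}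

/-- Node `i` is impatient at time `t` if it is unhappy at time `t` and `t ≤ t*_i`. -/
def Impatient (w : ℕ) {n : ℕ} (c0 : Config n) (pr : ℕ → ZMod n × ZMod n)
    (i : ZMod n) (t : ℕ) : Prop :=
  ¬ happy w (traj w c0 pr t) i ∧ (t : ℕ∞) ≤ satTime w c0 pr i

/-- The left combatants of the block starting at `s`: the nodes of the left attacker
`A_L = {s - w, …, s - 1}` initially labeled `x`, together with the nodes of the left
defender `D_L = {s, …, s + w}` initially labeled `o`. -/
def leftCombatants (w : ℕ) {n : ℕ} [NeZero n] (c0 : Config n) (s : ZMod n) :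
    Finset (ZMod n) :=
  ((Finset.Icc 1 w).image fun k : ℕ => s - (k : ZMod n)).filter (fun i => c0 i = true) ∪
  ((Finset.range (w + 1)).image fun k : ℕ => s + (k : ZMod n)).filter (fun i => c0 i = false)

/-- The right combatants of the block of length `len` starting at `s`: the nodes of the
right attacker `A_R = {s + len, …, s + len + w - 1}` initially labeled `x`, together
with the nodes of the right defender `D_R = {s + len - 1 - w, …, s + len - 1}` initially
labeled `o`. -/
def rightCombatants (w : ℕ) {n : ℕ} [NeZero n] (c0 : Config n) (s : ZMod n) (len : ℕ) :
    Finset (ZMod n) :=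
  ((Finset.range w).image fun k : ℕ => s + ((len + k : ℕ) : ZMod n)).filter
      (fun i => c0 i = true) ∪
  ((Finset.range (w + 1)).image fun k : ℕ => s + ((len - 1 - k : ℕ) : ZMod n)).filter
      (fun i => c0 i = false)

/-- `l` is a pseudo-transcript of the combatant set `C` relative to time `t0`: it
enumerates `C` without repetitions, all combatants with satisfaction time `> t0` come
first (in an arbitrary order, corresponding to an arbitrary permutation of their
signs), and the remaining combatants are listed in decreasing order of satisfaction
time. -/
def IsPseudoTranscript (w : ℕ) {n : ℕ} (c0 : Config n) (pr : ℕ → ZMod n × ZMod n)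
    (t0 : ℕ) (C : Finset (ZMod n)) (l : List (ZMod n)) : Prop :=
  l.Nodup ∧ l.toFinset = C ∧
  ∀ p q : Fin l.length, (p : ℕ) < (q : ℕ) →
    ((t0 : ℕ∞) < satTime w c0 pr (l.get q) → (t0 : ℕ∞) < satTime w c0 pr (l.get p)) ∧
    (satTime w c0 pr (l.get q) ≤ (t0 : ℕ∞) → satTime w c0 pr (l.get p) ≤ (t0 : ℕ∞) →
      satTime w c0 pr (l.get q) ≤ satTime w c0 pr (l.get p))

/-- All partial sums of the sign sequence associated to the list `l` (where each node
contributes the ±1 value of its initial label) are nonnegative. -/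
def NonnegPartialSums {n : ℕ} (c0 : Config n) (l : List (ZMod n)) : Prop :=
  ∀ m ≤ l.length, 0 ≤ ((l.take m).map fun i => xval (c0 i)).sum

/-- Nodes `i` and `j` belong to the same monochromatic run of `c`. -/
def sameRun {n : ℕ} (c : Config n) (i j : ZMod n) : Prop :=
  ∃ k : ℕ, ((j = i + (k : ZMod n)) ∧ ∀ m ≤ k, c (i + (m : ZMod n)) = c i) ∨
           ((j = i - (k : ZMod n)) ∧ ∀ m ≤ k, c (i - (m : ZMod n)) = c i)

/-- The length of the monochromatic run of `c` containing node `i`. -/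
noncomputable def runLength {n : ℕ} (c : Config n) (i : ZMod n) : ℕ :=
  Nat.card {j : ZMod n // sameRun c i j}

/-- The number of unhappy nodes with label `b`. -/
noncomputable def unhappyCount (w : ℕ) {n : ℕ} (c : Config n) (b : Bool) : ℕ :=
  Nat.card {i : ZMod n // c i = b ∧ ¬ happy w c i}

/-- The number of impatient nodes at time `t`. -/
noncomputable def impatientCount (w : ℕ) {n : ℕ} (c0 : Config n)
    (pr : ℕ → ZMod n × ZMod n) (t : ℕ) : ℕ :=
  Nat.card {i : ZMod n // Impatient w c0 pr i t}

/-- The absolute difference between the numbers of unhappy `x`'s and unhappy `o`'s. -/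
noncomputable def unhappyImbalance (w : ℕ) {n : ℕ} (c : Config n) : ℝ :=
  |(unhappyCount w c true : ℝ) - (unhappyCount w c false : ℝ)|

/-- The earliest time at which fewer than `bound` nodes are impatient (`∞` if never). -/
noncomputable def firstFewImpatient (w : ℕ) {n : ℕ} (c0 : Config n)
    (pr : ℕ → ZMod n × ZMod n) (bound : ℝ) : ℕ∞ :=
  sInf {t : ℕ∞ | ∃ t' : ℕ, t = (t' : ℕ∞) ∧ (impatientCount w c0 pr t' : ℝ) < bound}

/-- The earliest time at which the numbers of unhappy `x`'s and unhappy `o`'s differ by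
more than `bound` (`∞` if never). -/
noncomputable def firstImbalance (w : ℕ) {n : ℕ} (c0 : Config n)
    (pr : ℕ → ZMod n × ZMod n) (bound : ℝ) : ℕ∞ :=
  sInf {t : ℕ∞ | ∃ t' : ℕ, t = (t' : ℕ∞) ∧ bound < unhappyImbalance w (traj w c0 pr t')}

/-- In the disjoint-cycles graph `G` (cycles of length `L`), the node reached from `i`
by moving `k` steps forward inside `i`'s cycle. -/
def gnbr (L : ℕ) {n : ℕ} (i : ZMod n) (k : ℕ) : ZMod n :=
  (((i.val / L) * L + ((i.val % L + k) % L) : ℕ) : ZMod n)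

/-- Happiness with respect to the disjoint-cycles graph `G`. -/
def ghappy (w L : ℕ) {n : ℕ} (c : Config n) (i : ZMod n) : Prop :=
  w ≤ ∑ k ∈ Finset.Icc 1 w,
      ((if c (gnbr L i k) = c i then 1 else 0) +
       (if c (gnbr L i (L - k)) = c i then 1 else 0))

instance (w L : ℕ) {n : ℕ} (c : Config n) (i : ZMod n) : Decidable (ghappy w L c i) :=
  Nat.decLe _ _

/-- One step of the segregation dynamics on the disjoint-cycles graph `G`. -/
def gswapStep (w L : ℕ) {n : ℕ} (c : Config n) (p : ZMod n × ZMod n) : Config n :=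
  if ¬ ghappy w L c p.1 ∧ ¬ ghappy w L c p.2 ∧ c p.1 ≠ c p.2 then doSwap c p.1 p.2 else c

/-- The trajectory of the process on `G`, coupled with the ring process by using the
same initial configuration and the same proposed pairs. -/
def gtraj (w L : ℕ) {n : ℕ} (c0 : Config n) (pr : ℕ → ZMod n × ZMod n) : ℕ → Config n
  | 0 => c0
  | t + 1 => gswapStep w L (gtraj w L c0 pr t) (pr t)

/-- The set of nodes within `w` steps of `i` in either graph (including `i`). -/
def nbhd (w L : ℕ) {n : ℕ} (i : ZMod n) : Set (ZMod n) :=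
  {j | ∃ k ≤ w, j = i + (k : ZMod n) ∨ j = i - (k : ZMod n) ∨
        j = gnbr L i k ∨ j = gnbr L i (L - k)}

open Classical in
/-- The tainted set `D(t)`: initially the nodes whose residue mod `L` lies in
`{-w+1, …, w-1}`; whenever a proposed pair touches a tainted node, all nodes within `w`
steps (in either graph) of either member of the pair become tainted. -/
noncomputable def tainted (w L : ℕ) {n : ℕ} (pr : ℕ → ZMod n × ZMod n) :
    ℕ → Set (ZMod n)
  | 0 => {i | i.val % L < w ∨ L - w < i.val % L}
  | t + 1 =>
      if (pr t).1 ∈ tainted w L pr t ∨ (pr t).2 ∈ tainted w L pr t then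
        tainted w L pr t ∪ nbhd w L (pr t).1 ∪ nbhd w L (pr t).2
      else tainted w L pr t


/-!
Conditioning on the increasing event `χ(B) ≥ b` can only make the decreasing event `E^L_k`
less likely: this is Harris' inequality on the cube, a special case of the four functions
theorem. So it is enough to bound `Pr(E^L_k)`. Reflecting the walk after it first reaches `-k`
gives `Pr(E^L_k) ≤ Pr(|χ(B)| ≥ k)`, and Chebyshev's inequality with `𝔼 χ(B)² = w` bounds the
latter by `w / k²`.
-/

end Schelling

open Finset

theorem IsLowerSet.card_inter_mul_card_le_card_mul_card {α : Type*} [DistribLattice α]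
    [Fintype α] [DecidableEq α] {s t : Finset α} (hs : IsLowerSet (s : Set α))
    (ht : IsUpperSet (t : Set α)) : #(s ∩ t) * Fintype.card α ≤ #s * #t := by
  have key := four_functions_theorem_univ (β := ℕ) (fun a ↦ if a ∈ s ∩ t then 1 else 0) 1
    (fun a ↦ if a ∈ s then 1 else 0) (fun a ↦ if a ∈ t then 1 else 0)
    (fun _ ↦ by positivity) (fun _ ↦ by positivity) (fun _ ↦ by positivity)
    (fun _ ↦ by positivity) fun a b ↦ by
      by_cases ha : a ∈ s ∩ t
      · rw [mem_inter] at ha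
        have hinf : a ⊓ b ∈ s := hs inf_le_left ha.1
        have hsup : a ⊔ b ∈ t := ht le_sup_left ha.2
        simp [ha.1, ha.2, hinf, hsup]
      · simp [ha]
  simpa only [sum_boole, filter_univ_mem, Pi.one_apply, sum_const, card_univ, smul_eq_mul,
    mul_one, Nat.cast_id] using key

lemma ENNReal.natCast_div_le_ofReal_div {a b : ℕ} {c d : ℝ} (hb : 0 < b) (hd : 0 < d)
    (h : a * d ≤ c * b) : (a : ℝ≥0∞) / b ≤ ENNReal.ofReal (c / d) := by
  rw [← ENNReal.ofReal_natCast, ← ENNReal.ofReal_natCast,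
    ← ENNReal.ofReal_div_of_pos (Nat.cast_pos.2 hb)]
  exact ENNReal.ofReal_le_ofReal ((div_le_div_iff₀ (Nat.cast_pos.2 hb) hd).2 h)

namespace Schelling

section Uniform

variable {α : Type*} [Fintype α] [MeasurableSpace α] [MeasurableSingletonClass α]

lemma uniformOn_univ_setOf (p : α → Prop) [DecidablePred p] :
    uniformOn (univ : Finset α) {a | p a} = #{a | p a} / Fintype.card α := by
  have hp : MeasurableSet {a | p a} := (Set.toFinite _).measurableSet
  simp [uniformOn, Measure.dirac_apply' _ hp, Set.indicator_apply, ENNReal.div_eq_inv_mul]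

lemma cond_uniformOn_univ_setOf [Nonempty α] (p q : α → Prop) [DecidablePred p]
    [DecidablePred q] :
    cond (uniformOn (univ : Finset α)) {a | p a} {a | q a} = #{a | p a ∧ q a} / #{a | p a} := by
  have hN : (Fintype.card α : ℝ≥0∞) ≠ 0 := by simp
  rw [cond_apply (Set.toFinite _).measurableSet, ← Set.ofPred_and, uniformOn_univ_setOf,
    uniformOn_univ_setOf, ← ENNReal.div_eq_inv_mul, div_eq_mul_inv _ (Fintype.card α : ℝ≥0∞),
    div_eq_mul_inv _ (Fintype.card α : ℝ≥0∞),
    ENNReal.mul_div_mul_right _ _ (ENNReal.inv_ne_zero.2 (ENNReal.natCast_ne_top _))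
      (ENNReal.inv_ne_top.2 hN)]

end Uniform

section SignSequences

variable {m : ℕ}

lemma xval_not (b : Bool) : xval (!b) = -xval b := by cases b <;> rfl

lemma xval_mul_self (b : Bool) : xval b * xval b = 1 := by cases b <;> rfl

lemma monotone_xval : Monotone xval := by decide

lemma monotone_chiPrefix (j : ℕ) : Monotone fun B : Fin m → Bool ↦ chiPrefix B j :=
  fun _ _ h ↦ sum_le_sum fun i _ ↦ by split_ifs <;> simp [monotone_xval (h i)]

lemma monotone_chi : Monotone (chi (m := m)) :=
  fun _ _ h ↦ sum_le_sum fun i _ ↦ monotone_xval (h i)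

lemma sum_xval_mul_xval (i j : Fin m) :
    ∑ B : Fin m → Bool, xval (B i) * xval (B j) = if i = j then 2 ^ m else 0 := by
  split_ifs with hij
  · simp [hij, xval_mul_self]
  · refine sum_ninvolution (fun B ↦ Function.update B i (!B i)) (fun B ↦ ?_) (fun B _ h ↦ ?_)
      (fun _ ↦ mem_univ _) (fun B ↦ by simp)
    · rw [Function.update_self, Function.update_of_ne (Ne.symm hij), xval_not]
      ring
    · simpa using congrFun h i

lemma sum_chi_sq : ∑ B : Fin m → Bool, chi B ^ 2 = m * 2 ^ m := by
  simp_rw [sq, chi, sum_mul_sum]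
  rw [sum_comm]
  simp_rw [sum_comm (s := univ (α := Fin m → Bool)) (t := univ (α := Fin m)),
    sum_xval_mul_xval]
  simp

lemma card_le_abs_chi_mul_sq_le (k : ℕ) :
    #{B : Fin m → Bool | (k : ℤ) ≤ |chi B|} * k ^ 2 ≤ m * 2 ^ m := by
  suffices (#{B : Fin m → Bool | (k : ℤ) ≤ |chi B|} * k ^ 2 : ℤ) ≤ m * 2 ^ m by
    exact_mod_cast this
  calc (#{B : Fin m → Bool | (k : ℤ) ≤ |chi B|} * k ^ 2 : ℤ)
      ≤ ∑ B ∈ {B : Fin m → Bool | (k : ℤ) ≤ |chi B|}, chi B ^ 2 := by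
        rw [← nsmul_eq_mul]
        refine card_nsmul_le_sum _ _ _ fun B hB ↦ ?_
        rw [← sq_abs (chi B)]
        exact pow_le_pow_left₀ (Int.natCast_nonneg k) (mem_filter.1 hB).2 2
    _ ≤ ∑ B : Fin m → Bool, chi B ^ 2 :=
        sum_le_sum_of_subset_of_nonneg (filter_subset _ _) fun _ _ _ ↦ sq_nonneg _
    _ = m * 2 ^ m := sum_chi_sq

end SignSequences

section Reflection

open scoped Classical

variable {m : ℕ}

/-- `0` when `B` never reaches `-k`, by the `sInf ∅ = 0` convention. -/
noncomputable def hitTime (k : ℕ) (B : Fin m → Bool) : ℕ := sInf {j | chiPrefix B j ≤ -(k : ℤ)}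

def flipFrom (t : ℕ) (B : Fin m → Bool) : Fin m → Bool :=
  fun i ↦ if (i : ℕ) < t then B i else !B i

lemma flipFrom_flipFrom (t : ℕ) (B : Fin m → Bool) : flipFrom t (flipFrom t B) = B := by
  funext i
  by_cases hi : (i : ℕ) < t <;> simp [flipFrom, hi]

lemma chiPrefix_flipFrom (B : Fin m → Bool) {t j : ℕ} (hj : j ≤ t) :
    chiPrefix (flipFrom t B) j = chiPrefix B j :=
  sum_congr rfl fun i _ ↦ by
    split_ifs with hi
    · rw [flipFrom, if_pos (hi.trans_le hj)]
    · rfl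

lemma chi_flipFrom (t : ℕ) (B : Fin m → Bool) :
    chi (flipFrom t B) = 2 * chiPrefix B t - chi B := by
  simp only [chi, chiPrefix, mul_sum, ← sum_sub_distrib]
  refine sum_congr rfl fun i _ ↦ ?_
  by_cases hi : (i : ℕ) < t <;> simp [flipFrom, hi, xval_not]; ring

lemma chiPrefix_hitTime_le {k : ℕ} {B : Fin m → Bool} (h : ∃ j, chiPrefix B j ≤ -(k : ℤ)) :
    chiPrefix B (hitTime k B) ≤ -(k : ℤ) :=
  Nat.sInf_mem h

lemma hitTime_flipFrom_hitTime {k : ℕ} {B : Fin m → Bool}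
    (h : ∃ j, chiPrefix B j ≤ -(k : ℤ)) :
    hitTime k (flipFrom (hitTime k B) B) = hitTime k B := by
  have hhit : hitTime k B ∈ {j | chiPrefix (flipFrom (hitTime k B) B) j ≤ -(k : ℤ)} := by
    rw [Set.mem_ofPred_eq, chiPrefix_flipFrom B le_rfl]
    exact chiPrefix_hitTime_le h
  refine le_antisymm (Nat.sInf_le hhit) (le_csInf ⟨_, hhit⟩ fun j hj ↦ ?_)
  by_contra! hlt
  rw [Set.mem_ofPred_eq, chiPrefix_flipFrom B hlt.le] at hj
  exact (Nat.sInf_le hj).not_gt hlt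

/-- Reflecting the walk after it first reaches `-k` turns a final value above `-k` into one
below `-k`; flipping all signs then lands above `k`. -/
lemma card_exists_chiPrefix_le_and_lt_chi_le (k : ℕ) :
    #{B : Fin m → Bool | (∃ j, chiPrefix B j ≤ -(k : ℤ)) ∧ -(k : ℤ) < chi B}
      ≤ #{B : Fin m → Bool | (k : ℤ) < chi B} := by
  let reflectAtHit (B : Fin m → Bool) : Fin m → Bool := flipFrom (hitTime k B) B
  refine card_le_card_of_injOn (fun B i ↦ !reflectAtHit B i) (fun B hB ↦ ?_) ?_
  · simp only [coe_filter_univ, Set.mem_ofPred_eq] at hB ⊢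
    have hflip : chi (fun i ↦ !reflectAtHit B i) = -chi (reflectAtHit B) := by
      simp [chi, xval_not]
    rw [hflip, chi_flipFrom]
    linarith [chiPrefix_hitTime_le hB.1]
  · have hinv : Set.LeftInvOn reflectAtHit reflectAtHit
        {B | (∃ j, chiPrefix B j ≤ -(k : ℤ)) ∧ -(k : ℤ) < chi B} := fun B hB ↦ by
      simp only [reflectAtHit, hitTime_flipFrom_hitTime hB.1, flipFrom_flipFrom]
    intro B hB B' hB' hBB'
    rw [coe_filter_univ] at hB hB'
    have : reflectAtHit B = reflectAtHit B' := funext fun i ↦ by simpa using congrFun hBB' i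
    rw [← hinv hB, ← hinv hB', this]

lemma card_exists_chiPrefix_le_le_card_le_abs_chi (k : ℕ) :
    #{B : Fin m → Bool | ∃ j, chiPrefix B j ≤ -(k : ℤ)}
      ≤ #{B : Fin m → Bool | (k : ℤ) ≤ |chi B|} := by
  calc #{B : Fin m → Bool | ∃ j, chiPrefix B j ≤ -(k : ℤ)}
      ≤ #{B : Fin m → Bool | chi B ≤ -(k : ℤ) ∨
          (∃ j, chiPrefix B j ≤ -(k : ℤ)) ∧ -(k : ℤ) < chi B} :=
        card_le_card <| monotone_filter_right _ fun _ _ hB ↦ (le_or_gt _ _).imp id (⟨hB, ·⟩)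
    _ ≤ #{B : Fin m → Bool | chi B ≤ -(k : ℤ)} + #{B | (k : ℤ) < chi B} := by
        rw [filter_or]
        exact (card_union_le _ _).trans
          (Nat.add_le_add_left (card_exists_chiPrefix_le_and_lt_chi_le k) _)
    _ = #{B : Fin m → Bool | chi B ≤ -(k : ℤ) ∨ (k : ℤ) < chi B} := by
        rw [filter_or, card_union_of_disjoint (disjoint_filter.2 fun _ _ h h' ↦ by omega)]
    _ ≤ #{B : Fin m → Bool | (k : ℤ) ≤ |chi B|} :=
        card_le_card <| monotone_filter_right _ fun _ _ hB ↦
          le_abs.2 (hB.symm.imp le_of_lt le_neg_of_le_neg)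

lemma card_exists_chiPrefix_le_mul_sq_le (k : ℕ) :
    #{B : Fin m → Bool | ∃ j, chiPrefix B j ≤ -(k : ℤ)} * k ^ 2 ≤ m * 2 ^ m :=
  (Nat.mul_le_mul_right _ (card_exists_chiPrefix_le_le_card_le_abs_chi k)).trans
    (card_le_abs_chi_mul_sq_le k)

lemma card_le_chi_and_exists_chiPrefix_le_mul_sq_le (b : ℤ) (k : ℕ) :
    #{B : Fin m → Bool | b ≤ chi B ∧ ∃ j, chiPrefix B j ≤ -(k : ℤ)} * k ^ 2
      ≤ m * #{B : Fin m → Bool | b ≤ chi B} := by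
  set A : Finset (Fin m → Bool) := {B | b ≤ chi B}
  set E : Finset (Fin m → Bool) := {B | ∃ j, chiPrefix B j ≤ -(k : ℤ)}
  have hE : IsLowerSet (E : Set (Fin m → Bool)) := by
    rw [coe_filter_univ]
    exact fun B B' hle ⟨j, hj⟩ ↦ ⟨j, (monotone_chiPrefix j hle).trans hj⟩
  have hA : IsUpperSet (A : Set (Fin m → Bool)) := by
    rw [coe_filter_univ]
    exact fun B B' hle hB ↦ hB.trans (monotone_chi hle)
  have harris := hE.card_inter_mul_card_le_card_mul_card hA
  simp only [Fintype.card_fun, Fintype.card_bool, Fintype.card_fin] at harris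
  rw [filter_and, inter_comm]
  refine Nat.le_of_mul_le_mul_right ?_ (pow_pos two_pos m)
  calc #(E ∩ A) * k ^ 2 * 2 ^ m = #(E ∩ A) * 2 ^ m * k ^ 2 := by ring
    _ ≤ #E * #A * k ^ 2 := Nat.mul_le_mul_right _ harris
    _ = #E * k ^ 2 * #A := by ring
    _ ≤ m * 2 ^ m * #A := Nat.mul_le_mul_right _ (card_exists_chiPrefix_le_mul_sq_le k)
    _ = m * #A * 2 ^ m := by ring

end Reflection

/-- For a uniformly random `B ∈ {±1}^w`, `k > 0` and any integer `b`
with `Pr(χ(B) ≥ b) > 0`, we have `Pr(∃ j, χ_j(B) ≤ -k | χ(B) ≥ b) ≤ w / k²`. -/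
theorem prefix_event_bound (w k : ℕ) (hk : 0 < k) (b : ℤ)
    (hb : 0 < uniformOn (Finset.univ : Finset (Fin w → Bool)) {B | b ≤ chi B}) :
    ProbabilityTheory.cond (uniformOn (Finset.univ : Finset (Fin w → Bool)))
        {B | b ≤ chi B} {B | ∃ j : ℕ, chiPrefix B j ≤ -(k : ℤ)}
      ≤ ENNReal.ofReal ((w : ℝ) / (k : ℝ) ^ 2) := by
  classical
  have hA : 0 < #{B : Fin w → Bool | b ≤ chi B} := by
    rw [uniformOn_univ_setOf] at hb
    exact Nat.pos_of_ne_zero fun h ↦ by simp [h] at hb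
  rw [cond_uniformOn_univ_setOf]
  refine ENNReal.natCast_div_le_ofReal_div hA (by positivity) ?_
  exact_mod_cast card_le_chi_and_exists_chiPrefix_le_mul_sq_le b k

end Schelling
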